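/- Let γ > 0 and let x, y ∈ ℝ with y ≠ x. Under the hierarchical model in which the latent variance m has prior density EXP(m; γ) on (0, ∞) and the observation density is N(y; x, m), the conditional expectation of the latent precision 1/m given (x, y) is E[1/m | x, y] = [∫₀^∞ (1/m) · N(y; x, m) · EXP(m; γ) dm] / [∫₀^∞ N(y; x, m) · EXP(m; γ) dm] = √(2/(γ(y−x)²)), i.e. equals √(2/γ) / |y−x|. -/

import Mathlib

/-!
With `c = p / q`, the inversion `m ↦ c / m` fixes `exp (-(p / m) - q * m)` and turns `m ^ s dm`
into `c ^ (s + 1) * m ^ (-s - 2) dm`. Hence the integrals over `(0, ∞)` of `m ^ (-3/2)` and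
`m ^ (-1/2)` against this weight differ exactly by the factor `c ^ (1/2)`, here
`c = γ (y - x)² / 2`, and the posterior mean of `1/m` is `c ^ (-1/2)`.
-/

open MeasureTheory Real Set

theorem integral_comp_div_Ioi {E : Type*} [NormedAddCommGroup E] [NormedSpace ℝ E] {c : ℝ}
    (hc : 0 < c) (f : ℝ → E) :
    ∫ m in Ioi 0, (c / m ^ 2) • f (c / m) = ∫ m in Ioi 0, f m := by
  have himage : (c / ·) '' Ioi (0 : ℝ) = Ioi 0 := by
    ext t
    refine ⟨?_, fun ht => ⟨c / t, div_pos hc ht, div_div_cancel₀ hc.ne'⟩⟩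
    rintro ⟨m, hm, rfl⟩
    exact div_pos hc hm
  have hderiv : ∀ m ∈ Ioi (0 : ℝ), HasDerivWithinAt (c / ·) (-(c / m ^ 2)) (Ioi 0) m := by
    intro m hm
    simpa [div_eq_mul_inv, neg_div] using
      ((hasDerivAt_inv hm.ne').const_mul c).hasDerivWithinAt
  have hinj : InjOn (c / ·) (Ioi (0 : ℝ)) := fun m₁ _ m₂ _ h => by
    simpa only [div_div_cancel₀ hc.ne'] using congrArg (c / ·) h
  have hchange := integral_image_eq_integral_abs_deriv_smul measurableSet_Ioi hderiv hinj f
  rw [himage] at hchange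
  rw [hchange]
  refine setIntegral_congr_fun measurableSet_Ioi fun m hm => ?_
  rw [abs_neg, abs_of_pos (div_pos hc (pow_pos hm 2))]

/-- The unnormalised generalised inverse Gaussian density, meaningful for `0 < m`. -/
noncomputable def gigKernel (s p q m : ℝ) : ℝ := m ^ s * exp (-(p / m) - q * m)

theorem gigKernel_pos {m : ℝ} (hm : 0 < m) (s p q : ℝ) : 0 < gigKernel s p q m := by
  unfold gigKernel; positivity

theorem integral_gigKernel_reflect {p q : ℝ} (hp : 0 < p) (hq : 0 < q) (s : ℝ) :
    ∫ m in Ioi 0, gigKernel s p q m =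
      (p / q) ^ (s + 1) * ∫ m in Ioi 0, gigKernel (-s - 2) p q m := by
  set c := p / q with hc_def
  have hc : 0 < c := div_pos hp hq
  rw [← integral_comp_div_Ioi hc, ← integral_const_mul]
  refine setIntegral_congr_fun measurableSet_Ioi fun m (hm : 0 < m) => ?_
  have hexp : -(p / (c / m)) - q * (c / m) = -(p / m) - q * m := by
    rw [hc_def]; field_simp; ring
  have hrpow : c / m ^ 2 * (c / m) ^ s = c ^ (s + 1) * m ^ (-s - 2) := by
    rw [div_rpow hc.le hm.le, rpow_add_one hc.ne', rpow_sub hm, rpow_neg hm.le, rpow_two]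
    field_simp
  simp only [gigKernel, smul_eq_mul, hexp, ← mul_assoc, hrpow]

theorem integrableOn_gigKernel {s p q : ℝ} (hs : -1 < s) (hp : 0 ≤ p) (hq : 0 < q) :
    IntegrableOn (gigKernel s p q) (Ioi 0) := by
  refine (integrableOn_rpow_mul_exp_neg_mul_rpow hs zero_lt_one hq).mono' ?_ ?_
  · exact (by unfold gigKernel; fun_prop : Measurable (gigKernel s p q)).aestronglyMeasurable
  · filter_upwards [ae_restrict_mem measurableSet_Ioi] with m (hm : 0 < m)
    rw [Real.norm_of_nonneg (gigKernel_pos hm s p q).le, rpow_one, gigKernel]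
    gcongr
    have : 0 ≤ p / m := div_nonneg hp hm.le
    linarith

theorem integral_gigKernel_pos {s p q : ℝ} (hs : -1 < s) (hp : 0 ≤ p) (hq : 0 < q) :
    0 < ∫ m in Ioi 0, gigKernel s p q m := by
  rw [setIntegral_pos_iff_support_of_nonneg_ae _ (integrableOn_gigKernel hs hp hq)]
  · have hsupp : Ioi (0 : ℝ) ⊆ Function.support (gigKernel s p q) := fun m hm =>
      (gigKernel_pos hm s p q).ne'
    simp [inter_eq_self_of_subset_right hsupp]
  · filter_upwards [ae_restrict_mem measurableSet_Ioi] with m (hm : 0 < m)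
    exact (gigKernel_pos hm s p q).le

theorem integral_gigKernel_reflect_div {s p q : ℝ} (hs : -1 < s) (hp : 0 < p) (hq : 0 < q) :
    (∫ m in Ioi 0, gigKernel (-s - 2) p q m) / ∫ m in Ioi 0, gigKernel s p q m =
      (p / q) ^ (-(s + 1)) := by
  have hpos := integral_gigKernel_pos hs hp.le hq
  rw [integral_gigKernel_reflect hp hq s] at hpos ⊢
  have hI : (∫ m in Ioi 0, gigKernel (-s - 2) p q m) ≠ 0 := by
    rintro hI
    simp [hI] at hpos
  rw [rpow_neg (div_pos hp hq).le, div_mul_cancel_right₀ hI]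

theorem inv_mul_gigKernel {m : ℝ} (hm : 0 < m) (s p q : ℝ) :
    m⁻¹ * gigKernel s p q m = gigKernel (s - 1) p q m := by
  rw [gigKernel, gigKernel, ← mul_assoc, rpow_sub_one hm.ne', inv_mul_eq_div]

theorem gaussian_mul_exponential_eq_gigKernel {m : ℝ} (hm : 0 < m) (d γ : ℝ) :
    (√(2 * π * m))⁻¹ * exp (-d / (2 * m)) * ((1 / γ) * exp (-m / γ)) =
      (√(2 * π))⁻¹ * γ⁻¹ * gigKernel (-1 / 2) (d / 2) γ⁻¹ m := by
  have hexp : exp (-(d / 2 / m) - γ⁻¹ * m) = exp (-d / (2 * m)) * exp (-m / γ) := by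
    rw [← exp_add]
    ring_nf
  rw [gigKernel, hexp, show (-1 / 2 : ℝ) = -(1 / 2) by norm_num, rpow_neg hm.le, ← sqrt_eq_rpow,
    sqrt_mul (by positivity)]
  ring

/-- Proposition 2 (first identity, DDFM): under the hierarchical model
`y | x, m ~ N(y; x, m)`, `m ~ EXP(m; γ)`, the conditional expectation of the
latent precision `1/m` given `(x, y)` is `√(2/(γ(y−x)²)) = √(2/γ)/|y−x|`. -/
theorem conditional_expectation_latent_precision_m (γ x y : ℝ) (hγ : 0 < γ)
    (hxy : y ≠ x) :
    (∫ m in Set.Ioi (0 : ℝ),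
        (1 / m) * ((Real.sqrt (2 * Real.pi * m))⁻¹ * Real.exp (-(y - x) ^ 2 / (2 * m))) *
          ((1 / γ) * Real.exp (-m / γ))) /
      (∫ m in Set.Ioi (0 : ℝ),
        (Real.sqrt (2 * Real.pi * m))⁻¹ * Real.exp (-(y - x) ^ 2 / (2 * m)) *
          ((1 / γ) * Real.exp (-m / γ)))
      = Real.sqrt (2 / (γ * (y - x) ^ 2)) ∧
    Real.sqrt (2 / (γ * (y - x) ^ 2)) = Real.sqrt (2 / γ) / |y - x| := by
  set p := (y - x) ^ 2 / 2
  set K := (√(2 * π))⁻¹ * γ⁻¹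
  have hp : 0 < p := by have := sub_ne_zero.2 hxy; positivity
  have hK : 0 < K := by positivity
  have hnum : ∫ m in Ioi 0, (1 / m) * ((√(2 * π * m))⁻¹ * exp (-(y - x) ^ 2 / (2 * m))) *
      ((1 / γ) * exp (-m / γ)) = K * ∫ m in Ioi 0, gigKernel (-(-1 / 2) - 2) p γ⁻¹ m := by
    rw [← integral_const_mul]
    refine setIntegral_congr_fun measurableSet_Ioi fun m (hm : 0 < m) => ?_
    rw [mul_assoc, gaussian_mul_exponential_eq_gigKernel hm, one_div, mul_left_comm,
      inv_mul_gigKernel hm, show (-1 / 2 - 1 : ℝ) = -(-1 / 2) - 2 by norm_num]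
  have hden : ∫ m in Ioi 0, (√(2 * π * m))⁻¹ * exp (-(y - x) ^ 2 / (2 * m)) *
      ((1 / γ) * exp (-m / γ)) = K * ∫ m in Ioi 0, gigKernel (-1 / 2) p γ⁻¹ m := by
    rw [← integral_const_mul]
    exact setIntegral_congr_fun measurableSet_Ioi fun m hm =>
      gaussian_mul_exponential_eq_gigKernel hm _ γ
  refine ⟨?_, by rw [← div_div, sqrt_div' _ (sq_nonneg _), sqrt_sq_eq_abs]⟩
  rw [hnum, hden, mul_div_mul_left _ _ hK.ne',
    integral_gigKernel_reflect_div (by norm_num) hp (inv_pos.2 hγ),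
    show -(-1 / 2 + 1 : ℝ) = -(1 / 2) by norm_num, rpow_neg (by positivity), ← sqrt_eq_rpow,
    ← sqrt_inv]
  congr 1
  field_simp
  ring
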